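/- arXiv:2511.06222 — 5 statements merged into one kernel-verified Lean document; each statement's English description precedes it below -/
import Mathlib

section
/- Let Y be a nonempty finite type, G_a, G_b : Y → ℝ, and M ≥ 0 with |G_b(y)| ≤ M for all y ∈ Y. Suppose there is ε > 0 such that for all y1, y2 ∈ Y, if G_a(y1) > G_a(y2) then G_a(y1) − G_a(y2) ≥ ε, and suppose λ > 0 satisfies λ·ε > 2M. Define u(y) = λ·G_a(y) + G_b(y), let τ > 0, let π_ref : Y → ℝ be constant and strictly positive, and define the Bradley–Terry policy π*(y) = π_ref(y)·exp(u(y)/τ) / Σ_{y' ∈ Y} π_ref(y')·exp(u(y')/τ). Then for all y1, y2 ∈ Y: if G_a(y1) > G_a(y2), or G_a(y1) = G_a(y2) and G_b(y1) > G_b(y2), then π*(y1) > π*(y2). That is, the optimal Bradley–Terry policy strictly prefers lexicographically dominant responses. -/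
/-! Since `|G_b| ≤ M` and `λ ε > 2M`, a gap of at least `ε` in `G_a` outweighs any difference in
`G_b`, so the utility `u` is strictly monotone for the lexicographic order. With a constant
reference distribution the Bradley–Terry policy is proportional to `exp (u / τ)`, hence strictly
monotone in `u`. -/

open Real

lemma add_lt_add_of_gap {lam ε M a₁ a₂ b₁ b₂ : ℝ} (hlam : 0 < lam) (hlamε : 2 * M < lam * ε)
    (hb₁ : |b₁| ≤ M) (hb₂ : |b₂| ≤ M) (hgap : ε ≤ a₁ - a₂) :
    lam * a₂ + b₂ < lam * a₁ + b₁ := by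
  have hdiff : b₂ - b₁ ≤ 2 * M := by
    linarith [(abs_le.mp hb₁).1, (abs_le.mp hb₂).2]
  have hscaled : lam * ε ≤ lam * (a₁ - a₂) := mul_le_mul_of_nonneg_left hgap hlam.le
  linarith

lemma gibbs_lt_of_lt {Y : Type*} [Fintype Y] (w u : Y → ℝ) (hw : ∀ y, 0 < w y)
    {τ : ℝ} (hτ : 0 < τ) {y₁ y₂ : Y} (hw₁₂ : w y₂ ≤ w y₁) (hu : u y₂ < u y₁) :
    w y₂ * exp (u y₂ / τ) / ∑ y, w y * exp (u y / τ) <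
      w y₁ * exp (u y₁ / τ) / ∑ y, w y * exp (u y / τ) := by
  have hZ : 0 < ∑ y, w y * exp (u y / τ) :=
    Finset.sum_pos (fun y _ => mul_pos (hw y) (exp_pos _)) ⟨y₁, Finset.mem_univ _⟩
  have hexp : exp (u y₂ / τ) < exp (u y₁ / τ) := exp_lt_exp.mpr (by gcongr)
  exact div_lt_div_of_pos_right (mul_lt_mul' hw₁₂ hexp (exp_pos _).le (hw y₁)) hZ

theorem stmt_9_general {Y : Type*} [Fintype Y]
    (Ga Gb : Y → ℝ) (M : ℝ) (hGb : ∀ y, |Gb y| ≤ M)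
    (ε : ℝ)
    (hgap : ∀ y1 y2, Ga y1 > Ga y2 → Ga y1 - Ga y2 ≥ ε)
    (lam : ℝ) (hlam : 0 < lam) (hlamε : lam * ε > 2 * M)
    (u : Y → ℝ) (hu : ∀ y, u y = lam * Ga y + Gb y)
    (τ : ℝ) (hτ : 0 < τ)
    (πref : Y → ℝ) (hπref : ∀ y, 0 < πref y)
    (hconst : ∀ y1 y2, πref y1 = πref y2)
    (πstar : Y → ℝ)
    (hπstar : ∀ y, πstar y =
      πref y * Real.exp (u y / τ) / ∑ y', πref y' * Real.exp (u y' / τ)) :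
    ∀ y1 y2 : Y,
      (Ga y1 > Ga y2 ∨ (Ga y1 = Ga y2 ∧ Gb y1 > Gb y2)) →
        πstar y1 > πstar y2 := by
  intro y1 y2 hlex
  have hu12 : u y2 < u y1 := by
    rw [hu, hu]
    rcases hlex with hGa | ⟨hGa, hGb12⟩
    · exact add_lt_add_of_gap hlam hlamε (hGb y1) (hGb y2) (hgap y1 y2 hGa)
    · rw [hGa]
      linarith
  rw [hπstar, hπstar]
  exact gibbs_lt_of_lt πref u hπref hτ (hconst y2 y1).le hu12

theorem stmt_9 {Y : Type*} [Fintype Y] [Nonempty Y]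
    (Ga Gb : Y → ℝ) (M : ℝ) (hM : 0 ≤ M) (hGb : ∀ y, |Gb y| ≤ M)
    (ε : ℝ) (hε : 0 < ε)
    (hgap : ∀ y1 y2, Ga y1 > Ga y2 → Ga y1 - Ga y2 ≥ ε)
    (lam : ℝ) (hlam : 0 < lam) (hlamε : lam * ε > 2 * M)
    (u : Y → ℝ) (hu : ∀ y, u y = lam * Ga y + Gb y)
    (τ : ℝ) (hτ : 0 < τ)
    (πref : Y → ℝ) (hπref : ∀ y, 0 < πref y)
    (hconst : ∀ y1 y2, πref y1 = πref y2)
    (πstar : Y → ℝ)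
    (hπstar : ∀ y, πstar y =
      πref y * Real.exp (u y / τ) / ∑ y', πref y' * Real.exp (u y' / τ)) :
    ∀ y1 y2 : Y,
      (Ga y1 > Ga y2 ∨ (Ga y1 = Ga y2 ∧ Gb y1 > Gb y2)) →
        πstar y1 > πstar y2 :=
  stmt_9_general Ga Gb M hGb ε hgap lam hlam hlamε u hu τ hτ πref hπref hconst πstar hπstar
end

section
/- Let Y be a nonempty finite type, G_a, G_b : Y → ℝ, and M ≥ 0 with |G_b(y)| ≤ M for all y ∈ Y. Suppose there is ε > 0 such that for all y1, y2 ∈ Y, if G_a(y1) > G_a(y2) then G_a(y1) − G_a(y2) ≥ ε, and suppose λ > 0 satisfies λ·ε > 2M. Define u(y) = λ·G_a(y) + G_b(y), let τ > 0, let π_ref : Y → ℝ be constant and strictly positive, and define the Bradley–Terry policy π*(y) = π_ref(y)·exp(u(y)/τ) / Σ_{y' ∈ Y} π_ref(y')·exp(u(y')/τ). Then for all y1, y2 ∈ Y: π*(y1) > π*(y2) if and only if G_a(y1) > G_a(y2), or G_a(y1) = G_a(y2) and G_b(y1) > G_b(y2). That is, the Bradley–Terry policy ranks responses exactly according to the strict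 lexicographic order of their score pairs. -/
/-!
With a constant reference distribution, the Bradley–Terry policy is a strictly increasing
function of the utility `u = λ G_a + G_b`, so it suffices to show that `u` induces the
lexicographic order. A strict gap in `G_a` is at least `ε`, and `λ ε > 2M` exceeds any
difference of two values of `G_b`, so `G_a` decides the comparison whenever it differs and
`G_b` decides it otherwise.
-/

open Real Finset

noncomputable def bradleyTerry {Y : Type*} [Fintype Y] (πref u : Y → ℝ) (τ : ℝ) (y : Y) : ℝ :=
  πref y * exp (u y / τ) / ∑ y', πref y' * exp (u y' / τ)

theorem bradleyTerry_lt_bradleyTerry_iff {Y : Type*} [Fintype Y] {πref : Y → ℝ}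
    (hπref : ∀ y, 0 < πref y) (hconst : ∀ y1 y2, πref y1 = πref y2) (u : Y → ℝ)
    {τ : ℝ} (hτ : 0 < τ) (y1 y2 : Y) :
    bradleyTerry πref u τ y1 < bradleyTerry πref u τ y2 ↔ u y1 < u y2 := by
  have hsum : 0 < ∑ y', πref y' * exp (u y' / τ) :=
    sum_pos (fun y _ => mul_pos (hπref y) (exp_pos _)) ⟨y1, mem_univ y1⟩
  rw [bradleyTerry, bradleyTerry, hconst y2 y1, div_lt_div_iff_of_pos_right hsum,
    mul_lt_mul_iff_right₀ (hπref y1), exp_lt_exp, div_lt_div_iff_of_pos_right hτ]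

theorem add_lt_add_of_le_sub_of_abs_le {a₁ a₂ b₁ b₂ M ε lam : ℝ} (hgap : ε ≤ a₂ - a₁)
    (hb₁ : |b₁| ≤ M) (hb₂ : |b₂| ≤ M) (hlam : 0 < lam) (hlamε : 2 * M < lam * ε) :
    lam * a₁ + b₁ < lam * a₂ + b₂ := by
  have hscaled : lam * ε ≤ lam * (a₂ - a₁) := mul_le_mul_of_nonneg_left hgap hlam.le
  linarith [abs_le.mp hb₁, abs_le.mp hb₂]

theorem add_lt_add_iff_lex_of_gap {Y : Type*} {Ga Gb : Y → ℝ} {M ε lam : ℝ}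
    (hGb : ∀ y, |Gb y| ≤ M) (hgap : ∀ y1 y2, Ga y1 > Ga y2 → Ga y1 - Ga y2 ≥ ε)
    (hlam : 0 < lam) (hlamε : 2 * M < lam * ε) (y1 y2 : Y) :
    lam * Ga y2 + Gb y2 < lam * Ga y1 + Gb y1 ↔
      Ga y1 > Ga y2 ∨ (Ga y1 = Ga y2 ∧ Gb y1 > Gb y2) := by
  constructor
  · intro hu
    rcases lt_trichotomy (Ga y1) (Ga y2) with hlt | heq | hgt
    · have := add_lt_add_of_le_sub_of_abs_le (hgap y2 y1 hlt) (hGb y1) (hGb y2) hlam hlamε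
      exact absurd hu this.not_gt
    · exact Or.inr ⟨heq, by rw [heq] at hu; linarith⟩
    · exact Or.inl hgt
  · rintro (hgt | ⟨heq, hb⟩)
    · exact add_lt_add_of_le_sub_of_abs_le (hgap y1 y2 hgt) (hGb y2) (hGb y1) hlam hlamε
    · rw [heq]
      linarith

theorem stmt_10_general {Y : Type*} [Fintype Y]
    (Ga Gb : Y → ℝ) (M : ℝ) (hGb : ∀ y, |Gb y| ≤ M)
    (ε : ℝ)
    (hgap : ∀ y1 y2, Ga y1 > Ga y2 → Ga y1 - Ga y2 ≥ ε)
    (lam : ℝ) (hlam : 0 < lam) (hlamε : lam * ε > 2 * M)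
    (u : Y → ℝ) (hu : ∀ y, u y = lam * Ga y + Gb y)
    (τ : ℝ) (hτ : 0 < τ)
    (πref : Y → ℝ) (hπref : ∀ y, 0 < πref y)
    (hconst : ∀ y1 y2, πref y1 = πref y2)
    (πstar : Y → ℝ)
    (hπstar : ∀ y, πstar y =
      πref y * Real.exp (u y / τ) / ∑ y', πref y' * Real.exp (u y' / τ)) :
    ∀ y1 y2 : Y,
      πstar y1 > πstar y2 ↔
        (Ga y1 > Ga y2 ∨ (Ga y1 = Ga y2 ∧ Gb y1 > Gb y2)) := by
  have hπstar_eq : πstar = bradleyTerry πref u τ := funext hπstar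
  intro y1 y2
  rw [hπstar_eq, gt_iff_lt, bradleyTerry_lt_bradleyTerry_iff hπref hconst u hτ, hu, hu]
  exact add_lt_add_iff_lex_of_gap hGb hgap hlam hlamε y1 y2

theorem stmt_10 {Y : Type*} [Fintype Y] [Nonempty Y]
    (Ga Gb : Y → ℝ) (M : ℝ) (hM : 0 ≤ M) (hGb : ∀ y, |Gb y| ≤ M)
    (ε : ℝ) (hε : 0 < ε)
    (hgap : ∀ y1 y2, Ga y1 > Ga y2 → Ga y1 - Ga y2 ≥ ε)
    (lam : ℝ) (hlam : 0 < lam) (hlamε : lam * ε > 2 * M)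
    (u : Y → ℝ) (hu : ∀ y, u y = lam * Ga y + Gb y)
    (τ : ℝ) (hτ : 0 < τ)
    (πref : Y → ℝ) (hπref : ∀ y, 0 < πref y)
    (hconst : ∀ y1 y2, πref y1 = πref y2)
    (πstar : Y → ℝ)
    (hπstar : ∀ y, πstar y =
      πref y * Real.exp (u y / τ) / ∑ y', πref y' * Real.exp (u y' / τ)) :
    ∀ y1 y2 : Y,
      πstar y1 > πstar y2 ↔
        (Ga y1 > Ga y2 ∨ (Ga y1 = Ga y2 ∧ Gb y1 > Gb y2)) :=
  stmt_10_general Ga Gb M hGb ε hgap lam hlam hlamε u hu τ hτ πref hπref hconst πstar hπstar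
end

section
/- Let Y be a nonempty finite type, u : Y → ℝ, τ > 0, and let π, π_ref : Y → ℝ be strictly positive with Σ_{y ∈ Y} π(y) = 1. Suppose that for all y1, y2 ∈ Y, log(π(y1)/π_ref(y1)) − log(π(y2)/π_ref(y2)) = (u(y1) − u(y2))/τ. Then for all y ∈ Y, π(y) = π_ref(y)·exp(u(y)/τ) / Σ_{y' ∈ Y} π_ref(y')·exp(u(y')/τ); i.e., π equals the Bradley–Terry policy π*. -/
/-! Equal log-margins force `log (π / πref) - u / τ` to be constant, so `π` is a constant multiple
of `πref * exp (u / τ)`; the normalization `∑ π = 1` pins the constant down. -/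

open Finset

namespace Real

theorem eq_mul_exp_sub_of_log_sub_log_eq {Y : Type*} {f v : Y → ℝ} (hf : ∀ y, 0 < f y)
    (h : ∀ y1 y2, log (f y1) - log (f y2) = v y1 - v y2) (y y' : Y) :
    f y' = f y * exp (v y' - v y) := by
  have hlog : log (f y') = log (f y) + (v y' - v y) := by linarith [h y' y]
  rw [← exp_log (hf y'), hlog, exp_add, exp_log (hf y)]

end Real

theorem eq_div_sum_of_eq_mul_of_sum_eq_one {Y K : Type*} [Fintype Y] [Field K] {p w : Y → K}
    {c : K} (hp : ∀ y, p y = c * w y) (hsum : ∑ y, p y = 1) (y : Y) :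
    p y = w y / ∑ y', w y' := by
  have hc : c * ∑ y', w y' = 1 := by
    rw [mul_sum, ← hsum]
    exact sum_congr rfl fun y _ => (hp y).symm
  rw [hp y, eq_div_iff (right_ne_zero_of_mul_eq_one hc)]
  linear_combination w y * hc

theorem stmt_12_general {Y : Type*} [Fintype Y]
    (u : Y → ℝ) (τ : ℝ)
    (π πref : Y → ℝ) (hπ : ∀ y, 0 < π y) (hπref : ∀ y, 0 < πref y)
    (hsum : ∑ y, π y = 1)
    (hmargin : ∀ y1 y2 : Y,
      Real.log (π y1 / πref y1) - Real.log (π y2 / πref y2) =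
        (u y1 - u y2) / τ) :
    ∀ y : Y,
      π y = πref y * Real.exp (u y / τ) /
        ∑ y', πref y' * Real.exp (u y' / τ) := by
  intro y
  have hratio := Real.eq_mul_exp_sub_of_log_sub_log_eq (fun y => div_pos (hπ y) (hπref y))
    (fun y1 y2 => (hmargin y1 y2).trans (sub_div _ _ _)) y
  have hgibbs : ∀ y',
      π y' = π y / πref y * Real.exp (-(u y / τ)) * (πref y' * Real.exp (u y' / τ)) := by
    intro y'
    rw [← div_mul_cancel₀ (π y') (hπref y').ne', hratio y', sub_eq_add_neg, Real.exp_add]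
    ring
  exact eq_div_sum_of_eq_mul_of_sum_eq_one hgibbs hsum y

theorem stmt_12 {Y : Type*} [Fintype Y] [Nonempty Y]
    (u : Y → ℝ) (τ : ℝ) (hτ : 0 < τ)
    (π πref : Y → ℝ) (hπ : ∀ y, 0 < π y) (hπref : ∀ y, 0 < πref y)
    (hsum : ∑ y, π y = 1)
    (hmargin : ∀ y1 y2 : Y,
      Real.log (π y1 / πref y1) - Real.log (π y2 / πref y2) =
        (u y1 - u y2) / τ) :
    ∀ y : Y,
      π y = πref y * Real.exp (u y / τ) /
        ∑ y', πref y' * Real.exp (u y' / τ) :=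
  stmt_12_general u τ π πref hπ hπref hsum hmargin
end

section
/- Let Y be a nonempty finite type, u : Y → ℝ, τ > 0, π_ref : Y → ℝ strictly positive, and let p : Y × Y → ℝ be weights with p(y1, y2) > 0 for all pairs. For a strictly positive policy π : Y → ℝ define L(π) = Σ_{(y1,y2) ∈ Y×Y} p(y1, y2)·(h_π(y1, y2) − (u(y1) − u(y2))/τ)², where h_π(y1, y2) = log(π(y1)/π_ref(y1)) − log(π(y2)/π_ref(y2)). If π is strictly positive with Σ_{y ∈ Y} π(y) = 1 and L(π) ≤ L(π') for every strictly positive π' : Y → ℝ with Σ_{y ∈ Y} π'(y) = 1 (i.e., π is a global minimizer of L over positive probability distributions), then π(y) = π_ref(y)·exp(u(y)/τ) / Σ_{y' ∈ Y} π_ref(y')·exp(u(y')/τ) for all y ∈ Y; i.e., the unique global minimizer of the supervised preference loss is the Bradley–Terry policy π*. -/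
theorem stmt_15 {Y : Type*} [Fintype Y] [Nonempty Y]
    (u : Y → ℝ) (τ : ℝ) (hτ : 0 < τ)
    (πref : Y → ℝ) (hπref : ∀ y, 0 < πref y)
    (p : Y × Y → ℝ) (hp : ∀ q, 0 < p q)
    (L : (Y → ℝ) → ℝ)
    (hL : ∀ π : Y → ℝ, L π = ∑ q : Y × Y,
      p q * ((Real.log (π q.1 / πref q.1) - Real.log (π q.2 / πref q.2)) -
        (u q.1 - u q.2) / τ) ^ 2)
    (π : Y → ℝ) (hπ : ∀ y, 0 < π y) (hsum : ∑ y, π y = 1)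
    (hmin : ∀ π' : Y → ℝ, (∀ y, 0 < π' y) → (∑ y, π' y = 1) → L π ≤ L π') :
    ∀ y : Y,
      π y = πref y * Real.exp (u y / τ) /
        ∑ y', πref y' * Real.exp (u y' / τ) := by
  set Z : ℝ := ∑ y', πref y' * Real.exp (u y' / τ) with hZ
  have hZpos : 0 < Z :=
    Finset.sum_pos (fun y _ => mul_pos (hπref y) (Real.exp_pos _)) Finset.univ_nonempty
  set πs : Y → ℝ := fun y => πref y * Real.exp (u y / τ) / Z with hπs
  have hπspos : ∀ y, 0 < πs y :=
    fun y => div_pos (mul_pos (hπref y) (Real.exp_pos _)) hZpos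
  have hπssum : ∑ y, πs y = 1 := by
    simp only [hπs, div_eq_mul_inv, ← Finset.sum_mul, ← hZ]
    field_simp
    exact hZ.symm
  have hlog : ∀ y, Real.log (πs y / πref y) = u y / τ - Real.log Z := by
    intro y
    have h1 : πs y / πref y = Real.exp (u y / τ) / Z := by
      rw [hπs]
      field_simp [(hπref y).ne', hZpos.ne']
    rw [h1, Real.log_div (Real.exp_ne_zero _) (ne_of_gt hZpos), Real.log_exp]
  have hLs : L πs = 0 := by
    rw [hL]
    apply Finset.sum_eq_zero
    intro q _
    rw [hlog, hlog, sub_div]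
    ring
  have hLnonneg : ∀ q : Y × Y, q ∈ Finset.univ → 0 ≤
      p q * ((Real.log (π q.1 / πref q.1) - Real.log (π q.2 / πref q.2)) -
        (u q.1 - u q.2) / τ) ^ 2 :=
    fun q _ => mul_nonneg (hp q).le (sq_nonneg _)
  have hLzero : L π = 0 :=
    le_antisymm (by rw [← hLs]; exact hmin πs hπspos hπssum)
      (by rw [hL]; exact Finset.sum_nonneg hLnonneg)
  have hterm : ∀ y1 y2 : Y,
      (Real.log (π y1 / πref y1) - Real.log (π y2 / πref y2)) - (u y1 - u y2) / τ = 0 := by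
    intro y1 y2
    rw [hL] at hLzero
    have h0 := (Finset.sum_eq_zero_iff_of_nonneg hLnonneg).mp hLzero (y1, y2)
      (Finset.mem_univ _)
    rcases mul_eq_zero.mp h0 with h2 | h2
    · exact absurd h2 (hp (y1, y2)).ne'
    · exact pow_eq_zero_iff (by norm_num) |>.mp h2
  obtain ⟨y0⟩ := ‹Nonempty Y›
  set C : ℝ := π y0 / (πref y0 * Real.exp (u y0 / τ)) with hC
  have hform : ∀ y, π y = C * (πref y * Real.exp (u y / τ)) := by
    intro y
    have h := hterm y y0
    have hlogeq : Real.log (π y / πref y) =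
        Real.log (π y0 / πref y0) + (u y - u y0) / τ := by linarith
    have hpos1 : 0 < π y / πref y := div_pos (hπ y) (hπref y)
    have hpos2 : 0 < π y0 / πref y0 := div_pos (hπ y0) (hπref y0)
    have hexp := congrArg Real.exp hlogeq
    rw [Real.exp_log hpos1, Real.exp_add, Real.exp_log hpos2, sub_div,
      Real.exp_sub] at hexp
    rw [div_eq_iff (hπref y).ne'] at hexp
    rw [hexp, hC]
    field_simp [(hπref y0).ne']
  have hCZ : C * Z = 1 := by
    rw [hZ, Finset.mul_sum, ← hsum]
    exact Finset.sum_congr rfl fun y _ => (hform y).symm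
  intro y
  rw [hform y, eq_div_iff (ne_of_gt hZpos)]
  calc C * (πref y * Real.exp (u y / τ)) * Z
      = (C * Z) * (πref y * Real.exp (u y / τ)) := by ring
    _ = πref y * Real.exp (u y / τ) := by rw [hCZ, one_mul]
end

section
/- Let Y be a nonempty finite type, u : Y → ℝ, τ > 0, π_ref : Y → ℝ strictly positive, and let p : Y × Y → ℝ be weights with p(y1, y2) > 0 for all pairs. Define L(π) = Σ_{(y1,y2) ∈ Y×Y} p(y1, y2)·(h_π(y1, y2) − (u(y1) − u(y2))/τ)² for strictly positive π : Y → ℝ, where h_π(y1, y2) = log(π(y1)/π_ref(y1)) − log(π(y2)/π_ref(y2)). Then the Bradley–Terry policy π*(y) = π_ref(y)·exp(u(y)/τ) / Σ_{y' ∈ Y} π_ref(y')·exp(u(y')/τ) satisfies L(π*) = 0, hence π* is a global minimizer of L. -/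
/-! The log-partition function `log Z` of the Bradley–Terry policy cancels in the implicit reward
margin, which therefore equals the scaled utility gap `(u y₁ - u y₂) / τ` exactly: every term of
`L π*` vanishes, while `L` is a sum of nonnegative terms. -/

open Finset

section Gibbs

variable {Y : Type*} [Fintype Y] {w : Y → ℝ} (f : Y → ℝ)

theorem log_gibbs_div_base (hw : ∀ y, 0 < w y) (y : Y) :
    Real.log (w y * Real.exp (f y) / (∑ y', w y' * Real.exp (f y')) / w y) =
      f y - Real.log (∑ y', w y' * Real.exp (f y')) := by
  have hZ : 0 < ∑ y', w y' * Real.exp (f y') :=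
    sum_pos (fun y' _ => mul_pos (hw y') (Real.exp_pos _)) ⟨y, mem_univ y⟩
  rw [div_div, mul_comm _ (w y), mul_div_mul_left _ _ (hw y).ne',
    Real.log_div (Real.exp_ne_zero _) hZ.ne', Real.log_exp]

theorem log_gibbs_div_base_sub (hw : ∀ y, 0 < w y) (y₁ y₂ : Y) :
    Real.log (w y₁ * Real.exp (f y₁) / (∑ y', w y' * Real.exp (f y')) / w y₁) -
      Real.log (w y₂ * Real.exp (f y₂) / (∑ y', w y' * Real.exp (f y')) / w y₂) =
      f y₁ - f y₂ := by
  rw [log_gibbs_div_base f hw, log_gibbs_div_base f hw]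
  ring

end Gibbs

theorem stmt_16_general {Y : Type*} [Fintype Y]
    (u : Y → ℝ) (τ : ℝ)
    (πref : Y → ℝ) (hπref : ∀ y, 0 < πref y)
    (p : Y × Y → ℝ) (hp : ∀ q, 0 < p q)
    (L : (Y → ℝ) → ℝ)
    (hL : ∀ π : Y → ℝ, L π = ∑ q : Y × Y,
      p q * ((Real.log (π q.1 / πref q.1) - Real.log (π q.2 / πref q.2)) -
        (u q.1 - u q.2) / τ) ^ 2)
    (πstar : Y → ℝ)
    (hπstar : ∀ y, πstar y =
      πref y * Real.exp (u y / τ) / ∑ y', πref y' * Real.exp (u y' / τ)) :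
    L πstar = 0 ∧ ∀ π : Y → ℝ, (∀ y, 0 < π y) → L πstar ≤ L π := by
  have hzero : L πstar = 0 := by
    rw [hL]
    refine sum_eq_zero fun q _ => ?_
    have hmargin := log_gibbs_div_base_sub (fun y => u y / τ) hπref q.1 q.2
    rw [hπstar, hπstar, hmargin, sub_div, sub_self, sq, mul_zero, mul_zero]
  refine ⟨hzero, fun π _ => ?_⟩
  rw [hzero, hL]
  exact sum_nonneg fun q _ => mul_nonneg (hp q).le (sq_nonneg _)

theorem stmt_16 {Y : Type*} [Fintype Y] [Nonempty Y]
    (u : Y → ℝ) (τ : ℝ) (hτ : 0 < τ)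
    (πref : Y → ℝ) (hπref : ∀ y, 0 < πref y)
    (p : Y × Y → ℝ) (hp : ∀ q, 0 < p q)
    (L : (Y → ℝ) → ℝ)
    (hL : ∀ π : Y → ℝ, L π = ∑ q : Y × Y,
      p q * ((Real.log (π q.1 / πref q.1) - Real.log (π q.2 / πref q.2)) -
        (u q.1 - u q.2) / τ) ^ 2)
    (πstar : Y → ℝ)
    (hπstar : ∀ y, πstar y =
      πref y * Real.exp (u y / τ) / ∑ y', πref y' * Real.exp (u y' / τ)) :
    L πstar = 0 ∧ ∀ π : Y → ℝ, (∀ y, 0 < π y) → L πstar ≤ L π :=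
  stmt_16_general u τ πref hπref p hp L hL πstar hπstar
end
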